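/- The linear map ε_a : kF_X^a → k sending the single-vertex tree • to 1 and every other angularly decorated rooted forest to 0 is a counit for the angular coproduct: (ε_a ⊗ id) ∘ Δ_a = id = (id ⊗ ε_a) ∘ Δ_a under the canonical identifications k ⊗ kF_X^a ≅ kF_X^a ≅ kF_X^a ⊗ k. -/

import Mathlib

set_option linter.unreachableTactic false
set_option linter.unnecessarySeqFocus false
set_option linter.unusedTactic false

/-! Angularly decorated planar rooted trees and forests over a decoration set `X`.
A tree is either the single-vertex tree `•` (leaf) or the grafting `B⁺(F)` of a forest;
a forest is an alternating word `T₁ x₁ T₂ x₂ ⋯ x_{ℓ-1} T_ℓ` of trees and decorations. -/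
mutual
  inductive ATree (X : Type) : Type
    | leaf : ATree X
    | graft : AForest X → ATree X
  inductive AForest (X : Type) : Type
    | single : ATree X → AForest X
    | cons : ATree X → X → AForest X → AForest X
end

mutual
  /-- Depth of an angularly decorated tree. -/
  def ATree.depth {X : Type} : ATree X → ℕ
    | .leaf => 0
    | .graft F => AForest.depth F + 1
  /-- Depth of an angularly decorated forest. -/
  def AForest.depth {X : Type} : AForest X → ℕ
    | .single T => ATree.depth T
    | .cons T _ F => max (ATree.depth T) (AForest.depth F)
end

mutual
  /-- An auxiliary size of an angularly decorated tree. -/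
  def ATree.size {X : Type} : ATree X → ℕ
    | .leaf => 1
    | .graft F => AForest.size F + 1
  /-- An auxiliary size of an angularly decorated forest. -/
  def AForest.size {X : Type} : AForest X → ℕ
    | .single T => ATree.size T + 1
    | .cons T _ F => ATree.size T + AForest.size F + 1
end

mutual
  /-- The number of vertices of an angularly decorated tree. -/
  def ATree.deg {X : Type} : ATree X → ℕ
    | .leaf => 1
    | .graft F => AForest.deg F + 1
  /-- The number of vertices of an angularly decorated forest. -/
  def AForest.deg {X : Type} : AForest X → ℕ
    | .single T => ATree.deg T
    | .cons T _ F => ATree.deg T + AForest.deg F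
end

/-- Auxiliary lemma for termination proofs. -/
theorem natlex_of_le_of_lt {a₁ a₂ b₁ b₂ : ℕ} (h1 : a₁ ≤ a₂) (h2 : b₁ < b₂) :
    Prod.Lex (fun x y : ℕ => x < y) (fun x y : ℕ => x < y) (a₁, b₁) (a₂, b₂) := by
  rcases lt_or_eq_of_le h1 with h | rfl
  · exact Prod.Lex.left _ _ h
  · exact Prod.Lex.right _ h2

/-- `RBF k X` is the free `k`-module on the set of angularly decorated rooted forests. -/
abbrev RBF (k X : Type) [CommRing k] := AForest X →₀ k

mutual
  /-- The product `⋄ₐ` on basis trees (with values in the free module on trees). -/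
  noncomputable def mulT {k X : Type} [CommRing k] (lam : k) :
      ATree X → ATree X → (ATree X →₀ k)
    | .leaf, T' => Finsupp.single T' 1
    | T, .leaf => Finsupp.single T 1
    | .graft F, .graft F' =>
        Finsupp.mapDomain ATree.graft (mulF lam (.single (.graft F)) F')
          + Finsupp.mapDomain ATree.graft (mulF lam F (.single (.graft F')))
          + lam • Finsupp.mapDomain ATree.graft (mulF lam F F')
  termination_by T T' => (ATree.depth T + ATree.depth T', ATree.size T + ATree.size T')
  decreasing_by
    all_goals
      first
        | (apply Prod.Lex.left
           simp [ATree.depth, AForest.depth] <;> omega)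
        | (apply natlex_of_le_of_lt <;>
            simp [ATree.depth, AForest.depth, ATree.size, AForest.size] <;>
            omega)
  /-- The product `⋄ₐ` on basis forests. -/
  noncomputable def mulF {k X : Type} [CommRing k] (lam : k) :
      AForest X → AForest X → RBF k X
    | .single T, .single T' => Finsupp.mapDomain AForest.single (mulT lam T T')
    | .single T, .cons T' y G' =>
        Finsupp.mapDomain (fun t => AForest.cons t y G') (mulT lam T T')
    | .cons T x G, F' => Finsupp.mapDomain (fun g => AForest.cons T x g) (mulF lam G F')
  termination_by F F' => (AForest.depth F + AForest.depth F', AForest.size F + AForest.size F')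
  decreasing_by
    all_goals
      first
        | (apply Prod.Lex.left
           simp [ATree.depth, AForest.depth] <;> omega)
        | (apply natlex_of_le_of_lt <;>
            simp [ATree.depth, AForest.depth, ATree.size, AForest.size] <;>
            omega)
end

open scoped TensorProduct

variable {k X : Type} [CommRing k]

/-- The unit `•` of the Rota-Baxter algebra `kF_X^a`: the single-vertex tree. -/
noncomputable def RBF.one : RBF k X := Finsupp.single (AForest.single ATree.leaf) 1

/-- The canonical basis inclusion of forests into `kF_X^a`. -/
noncomputable def RBF.of (F : AForest X) : RBF k X := Finsupp.single F 1

/-- The natural map `i_X : X → kF_X^a`, `x ↦ • x •`. -/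
noncomputable def RBF.iX (x : X) : RBF k X :=
  RBF.of (AForest.cons ATree.leaf x (AForest.single ATree.leaf))

/-- The grafting operator `B⁺` as a `k`-linear operator on `kF_X^a`. -/
noncomputable def RBF.Bplus : RBF k X →ₗ[k] RBF k X :=
  Finsupp.lmapDomain k k (fun F => AForest.single (ATree.graft F))

/-- The multiplication `⋄ₐ` on `kF_X^a` as a `k`-bilinear map. -/
noncomputable def RBF.mul (lam : k) : RBF k X →ₗ[k] RBF k X →ₗ[k] RBF k X :=
  Finsupp.lift _ k _ fun F => Finsupp.lift _ k _ fun F' => mulF lam F F'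

/-- Concatenation of two forests with the angle between them decorated by `x`. -/
def concatA (x : X) : AForest X → AForest X → AForest X
  | .single T, F' => .cons T x F'
  | .cons T y G, F' => .cons T y (concatA x G F')

/-- Concatenation with middle angle decorated by `x`, as a bilinear map on `kF_X^a`. -/
noncomputable def RBF.concat (x : X) : RBF k X →ₗ[k] RBF k X →ₗ[k] RBF k X :=
  Finsupp.lift _ k _ fun F => Finsupp.lift _ k _ fun F' => RBF.of (concatA x F F')

/-- Given two bilinear maps `f g` on a module `M`, the bilinear map on `M ⊗ M` sending
`(a ⊗ b, c ⊗ d)` to `f a c ⊗ g b d`. -/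
noncomputable def mixMap {M : Type} [AddCommGroup M] [Module k M]
    (f g : M →ₗ[k] M →ₗ[k] M) :
    (M ⊗[k] M) →ₗ[k] (M ⊗[k] M) →ₗ[k] (M ⊗[k] M) :=
  TensorProduct.curry
    ((TensorProduct.map (TensorProduct.lift f) (TensorProduct.lift g)).comp
      (TensorProduct.tensorTensorTensorComm k M M M M).toLinearMap)

mutual
  /-- The angular coproduct of a basis tree: the sum of `cl(H) ⊗ T/H` over all
  subforests `H ⊑ T` (sequences of mutually disjoint full subtrees and bare angular
  decorations in planar order). -/
  noncomputable def coT (lam : k) : ATree X → RBF k X ⊗[k] RBF k X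
    | .leaf => RBF.one ⊗ₜ[k] RBF.one
    | .graft F => (RBF.of (AForest.single (ATree.graft F))) ⊗ₜ[k] RBF.one
        + (LinearMap.lTensor (RBF k X) RBF.Bplus) (coF lam F)
  /-- The angular coproduct of a basis forest: the sum of `cl(H) ⊗ F/H` over all
  subforests `H ⊑ F`. -/
  noncomputable def coF (lam : k) : AForest X → RBF k X ⊗[k] RBF k X
    | .single T => coT lam T
    | .cons T x G =>
        mixMap (RBF.concat x) (RBF.mul lam) (coT lam T) (coF lam G)
          + mixMap (RBF.mul lam) (RBF.concat x) (coT lam T) (coF lam G)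
end

/-- The angular coproduct `Δₐ : kF_X^a → kF_X^a ⊗ kF_X^a`,
`Δₐ(F) = Σ_{H ⊑ F} cl(H) ⊗ F/H`. -/
noncomputable def RBF.Delta (lam : k) : RBF k X →ₗ[k] RBF k X ⊗[k] RBF k X :=
  Finsupp.lift _ k _ fun F => coF lam F

/-- The counit `εₐ : kF_X^a → k` sending the single-vertex tree `•` to `1` and every
other forest to `0`. -/
noncomputable def RBF.eps : RBF k X →ₗ[k] k :=
  Finsupp.lift _ k _ fun F =>
    match F with
    | .single .leaf => (1 : k)
    | _ => 0

/-- The unit map `u : k → kF_X^a`, `c ↦ c •`. -/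
noncomputable def RBF.unit : k →ₗ[k] RBF k X :=
  LinearMap.toSpanSingleton k (RBF k X) RBF.one

/-! `εₐ` reads off the coefficient of `•`. That coefficient is multiplicative for `⋄ₐ` and
vanishes on concatenations and on grafts `B⁺(F)`. In the recursion for `Δₐ(T x G)`, a sum of
two mixed products of `Δₐ(T)` and `Δₐ(G)` (concatenation in one tensor factor, `⋄ₐ` in the
other), contracting one factor with `εₐ` therefore kills the summand that concatenates there and
turns the other into the concatenation of the contracted factors. Mutual induction on trees
and forests then shows that both contractions of `Δₐ(F)` give back `F`. -/

section Counit

variable {M : Type} [AddCommGroup M] [Module k M] (ε : M →ₗ[k] k)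

noncomputable def counitLeft : M ⊗[k] M →ₗ[k] M :=
  (TensorProduct.lid k M).toLinearMap ∘ₗ ε.rTensor M

noncomputable def counitRight : M ⊗[k] M →ₗ[k] M :=
  (TensorProduct.rid k M).toLinearMap ∘ₗ ε.lTensor M

@[simp]
lemma counitLeft_tmul (a b : M) : counitLeft ε (a ⊗ₜ b) = ε a • b := by
  simp [counitLeft]

@[simp]
lemma counitRight_tmul (a b : M) : counitRight ε (a ⊗ₜ b) = ε b • a := by
  simp [counitRight]

lemma counitLeft_lTensor (φ : M →ₗ[k] M) (t : M ⊗[k] M) :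
    counitLeft ε (φ.lTensor M t) = φ (counitLeft ε t) := by
  induction t using TensorProduct.induction_on with
  | zero => simp
  | tmul a b => simp
  | add s t hs ht => simp only [map_add, hs, ht]

lemma counitRight_lTensor_of_comp_eq_zero {φ : M →ₗ[k] M} (hφ : ε ∘ₗ φ = 0)
    (t : M ⊗[k] M) : counitRight ε (φ.lTensor M t) = 0 := by
  rw [counitRight, LinearMap.comp_apply, ← LinearMap.comp_apply (ε.lTensor M),
    ← LinearMap.lTensor_comp, hφ, LinearMap.lTensor_zero]
  simp

section MixMap

variable {ε} {f g : M →ₗ[k] M →ₗ[k] M}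

lemma counitLeft_mixMap_of_mul (hf : ∀ a c, ε (f a c) = ε a * ε c) (u v : M ⊗[k] M) :
    counitLeft ε (mixMap f g u v) = g (counitLeft ε u) (counitLeft ε v) := by
  induction u using TensorProduct.induction_on with
  | zero => simp
  | add s t hs ht => simp only [map_add, LinearMap.add_apply, hs, ht]
  | tmul a b =>
    induction v using TensorProduct.induction_on with
    | zero => simp
    | add s t hs ht => simp only [map_add, hs, ht]
    | tmul c d => simp [mixMap, hf, mul_smul, smul_comm (ε a)]

lemma counitLeft_mixMap_of_eq_zero (hf : ∀ a c, ε (f a c) = 0) (u v : M ⊗[k] M) :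
    counitLeft ε (mixMap f g u v) = 0 := by
  induction u using TensorProduct.induction_on with
  | zero => simp
  | add s t hs ht => simp only [map_add, LinearMap.add_apply, hs, ht, add_zero]
  | tmul a b =>
    induction v using TensorProduct.induction_on with
    | zero => simp
    | add s t hs ht => simp only [map_add, hs, ht, add_zero]
    | tmul c d => simp [mixMap, hf]

lemma counitRight_mixMap_of_mul (hg : ∀ b d, ε (g b d) = ε b * ε d) (u v : M ⊗[k] M) :
    counitRight ε (mixMap f g u v) = f (counitRight ε u) (counitRight ε v) := by
  induction u using TensorProduct.induction_on with
  | zero => simp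
  | add s t hs ht => simp only [map_add, LinearMap.add_apply, hs, ht]
  | tmul a b =>
    induction v using TensorProduct.induction_on with
    | zero => simp
    | add s t hs ht => simp only [map_add, hs, ht]
    | tmul c d => simp [mixMap, hg, mul_smul, smul_comm (ε b)]

lemma counitRight_mixMap_of_eq_zero (hg : ∀ b d, ε (g b d) = 0) (u v : M ⊗[k] M) :
    counitRight ε (mixMap f g u v) = 0 := by
  induction u using TensorProduct.induction_on with
  | zero => simp
  | add s t hs ht => simp only [map_add, LinearMap.add_apply, hs, ht, add_zero]
  | tmul a b =>
    induction v using TensorProduct.induction_on with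
    | zero => simp
    | add s t hs ht => simp only [map_add, hs, ht, add_zero]
    | tmul c d => simp [mixMap, hg]

end MixMap

end Counit

lemma RBF.eps_eq_lapply : (RBF.eps : RBF k X →ₗ[k] k) = Finsupp.lapply (.single .leaf) := by
  ext F
  rcases F with (_ | _) | _ <;> simp [RBF.eps]

lemma mulT_apply_leaf (lam : k) (T T' : ATree X) :
    mulT lam T T' .leaf = Finsupp.single T 1 .leaf * Finsupp.single T' 1 .leaf := by
  cases T with
  | leaf => simp [mulT]
  | graft F =>
    cases T' with
    | leaf => simp [mulT]
    | graft F' =>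
      rw [mulT]
      simp [Finsupp.mapDomain_of_notMem_range]

lemma mulF_apply_leaf (lam : k) (F F' : AForest X) :
    mulF lam F F' (.single .leaf) = RBF.of F (.single .leaf) * RBF.of F' (.single .leaf) := by
  rcases F with T | ⟨T, x, G⟩
  · rcases F' with T' | ⟨T', y, G'⟩
    · rw [mulF, Finsupp.mapDomain_apply (fun _ _ => AForest.single.inj), mulT_apply_leaf]
      simp only [RBF.of, Finsupp.single_apply_left (fun _ _ => AForest.single.inj)]
    · rw [mulF, Finsupp.mapDomain_of_notMem_range] <;> simp [RBF.of]
  · rw [mulF, Finsupp.mapDomain_of_notMem_range] <;> simp [RBF.of]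

lemma RBF.eps_mul (lam : k) (a b : RBF k X) :
    RBF.eps (RBF.mul lam a b) = RBF.eps a * RBF.eps b := by
  suffices (RBF.mul lam).compr₂ RBF.eps = (LinearMap.mul k k).compl₁₂ RBF.eps RBF.eps from
    LinearMap.congr_fun₂ this a b
  ext F F'
  simp [RBF.mul, RBF.eps_eq_lapply, mulF_apply_leaf, RBF.of]

lemma RBF.eps_concat (x : X) (a b : RBF k X) : RBF.eps (RBF.concat x a b) = 0 := by
  suffices (RBF.concat x).compr₂ RBF.eps = 0 from LinearMap.congr_fun₂ this a b
  ext F F'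
  cases F <;> simp [RBF.concat, RBF.eps_eq_lapply, RBF.of, concatA]

lemma RBF.eps_comp_Bplus : RBF.eps ∘ₗ (RBF.Bplus : RBF k X →ₗ[k] RBF k X) = 0 := by
  ext F
  simp [RBF.Bplus, RBF.eps_eq_lapply]

lemma RBF.Bplus_of (F : AForest X) :
    RBF.Bplus (RBF.of F : RBF k X) = RBF.of (.single (.graft F)) := by
  simp [RBF.Bplus, RBF.of]

lemma RBF.concat_of (x : X) (F F' : AForest X) :
    RBF.concat x (RBF.of F : RBF k X) (RBF.of F') = RBF.of (concatA x F F') := by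
  simp [RBF.concat, RBF.of]

lemma RBF.eps_one : RBF.eps (RBF.one : RBF k X) = 1 := by
  simp [RBF.eps_eq_lapply, RBF.one]

lemma RBF.eps_of_graft (F : AForest X) : RBF.eps (RBF.of (.single (.graft F)) : RBF k X) = 0 := by
  simp [RBF.eps_eq_lapply, RBF.of]

mutual

lemma counitLeft_coT (lam : k) :
    ∀ T : ATree X, counitLeft RBF.eps (coT lam T) = RBF.of (.single T)
  | .leaf => by rw [coT, counitLeft_tmul, RBF.eps_one, one_smul]; rfl
  | .graft F => by
    rw [coT, map_add, counitLeft_tmul, counitLeft_lTensor, counitLeft_coF lam F, RBF.Bplus_of,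
      RBF.eps_of_graft, zero_smul, zero_add]

lemma counitLeft_coF (lam : k) :
    ∀ F : AForest X, counitLeft RBF.eps (coF lam F) = RBF.of F
  | .single T => by rw [coF, counitLeft_coT]
  | .cons T x G => by
    rw [coF, map_add, counitLeft_mixMap_of_eq_zero (RBF.eps_concat x),
      counitLeft_mixMap_of_mul (RBF.eps_mul lam), counitLeft_coT lam T, counitLeft_coF lam G,
      RBF.concat_of, zero_add]
    rfl

end

mutual

lemma counitRight_coT (lam : k) :
    ∀ T : ATree X, counitRight RBF.eps (coT lam T) = RBF.of (.single T)
  | .leaf => by rw [coT, counitRight_tmul, RBF.eps_one, one_smul]; rfl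
  | .graft F => by
    rw [coT, map_add, counitRight_tmul, counitRight_lTensor_of_comp_eq_zero _ RBF.eps_comp_Bplus,
      RBF.eps_one, one_smul, add_zero]

lemma counitRight_coF (lam : k) :
    ∀ F : AForest X, counitRight RBF.eps (coF lam F) = RBF.of F
  | .single T => by rw [coF, counitRight_coT]
  | .cons T x G => by
    rw [coF, map_add, counitRight_mixMap_of_mul (RBF.eps_mul lam),
      counitRight_mixMap_of_eq_zero (RBF.eps_concat x), counitRight_coT lam T,
      counitRight_coF lam G, RBF.concat_of, add_zero]
    rfl

end

lemma counitLeft_comp_Delta (lam : k) :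
    counitLeft RBF.eps ∘ₗ RBF.Delta lam = (LinearMap.id : RBF k X →ₗ[k] RBF k X) := by
  ext F : 2
  simp [RBF.Delta, counitLeft_coF, RBF.of]

lemma counitRight_comp_Delta (lam : k) :
    counitRight RBF.eps ∘ₗ RBF.Delta lam = (LinearMap.id : RBF k X →ₗ[k] RBF k X) := by
  ext F : 2
  simp [RBF.Delta, counitRight_coF, RBF.of]

/-- The linear map `εₐ : kF_X^a → k` sending `•` to `1` and every
other forest to `0` is a counit for the angular coproduct:
`(εₐ ⊗ id) ∘ Δₐ = id = (id ⊗ εₐ) ∘ Δₐ` under the canonical identifications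
`k ⊗ kF_X^a ≅ kF_X^a ≅ kF_X^a ⊗ k`. -/
theorem angular_counit (k X : Type) [CommRing k] (lam : k) (a : RBF k X) :
    (TensorProduct.lid k (RBF k X))
        ((LinearMap.rTensor (RBF k X) RBF.eps) (RBF.Delta lam a)) = a
    ∧ (TensorProduct.rid k (RBF k X))
        ((LinearMap.lTensor (RBF k X) RBF.eps) (RBF.Delta lam a)) = a :=
  ⟨LinearMap.congr_fun (counitLeft_comp_Delta lam) a,
    LinearMap.congr_fun (counitRight_comp_Delta lam) a⟩
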